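/- Assume the MP₂ closure satisfies: (a) sgn(∂E_3/∂E_0) = −sgn(E_1); (b) ∂E_3/∂E_1 > 0 at E_1 = 0; (c) ∂²E_3/∂E_2² = 0; and (d) sgn(𝓔_3 − 𝓔_1³ − (𝓔_2 − 𝓔_1²)∂E_3/∂E_2) = sgn(E_1). Then for every state in the realizable domain, the characteristic polynomial p(λ) = λ³ − (∂E_3/∂E_2)λ² − (∂E_3/∂E_1)λ − ∂E_3/∂E_0 has three distinct real roots; hence the MP₂ system is hyperbolic. -/

import Mathlib

/-!
The closure has the form `E₃ = E₀ g(E₁/E₀) + E₂ h(E₁/E₀)`: it is homogeneous of degree one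
and affine in `E₂`. Euler's relation `E₀ ∂₀E₃ + E₁ ∂₁E₃ = E₀ g(u)` therefore evaluates the
characteristic polynomial at `u = E₁/E₀ = 𝓔₁` to `p(u) = -(𝓔₃ - 𝓔₁³ - (𝓔₂ - 𝓔₁²) ∂₂E₃)`,
whose sign is `-sgn E₁` by (d), while `p(0) = -∂₀E₃` has sign `sgn E₁` by (a). With the signs
of `p` at `±∞` this gives three sign changes. Euler's relation needs `g` and `h` to be
differentiable at `u`; this follows from (a), since a derivative with nonzero sign exists, and
`∂₀E₃` at two values of `E₂` separates `g` from `h`. When `E₁ = 0` all odd moments vanish, so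
`p(λ) = λ³ - (∂₁E₃) λ` and (b) gives the roots `0, ±√(∂₁E₃)`.
-/

open MeasureTheory intervalIntegral

/-- The M₁ parameter `α` as a function of `u = E₁/E₀`. -/
noncomputable def mpAlpha (u : ℝ) : ℝ := -(3 * u) / (2 + Real.sqrt (4 - 3 * u ^ 2))

/-- Normalization constant of the M₁ weight. -/
noncomputable def mpEps (a : ℝ) : ℝ := 3 * (1 - a ^ 2) ^ 3 / (2 * (3 + a ^ 2))

/-- The normalized M₁ ansatz used as weight function, as a function of `u = E₁/E₀`. -/
noncomputable def mpWeight (u μ : ℝ) : ℝ := mpEps (mpAlpha u) / (1 + mpAlpha u * μ) ^ 4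

/-- Moments `𝓔_k` of the weight function. -/
noncomputable def mpMoment (u : ℝ) (k : ℕ) : ℝ := ∫ μ in (-1 : ℝ)..1, μ ^ k * mpWeight u μ

/-- `β = (𝓔₃ - 𝓔₂𝓔₁)/(𝓔₂ - 𝓔₁²)`. -/
noncomputable def mpBeta (u : ℝ) : ℝ :=
  (mpMoment u 3 - mpMoment u 2 * mpMoment u 1) / (mpMoment u 2 - (mpMoment u 1) ^ 2)

/-- Expansion coefficient `f₂` of the MP₂ model. -/
noncomputable def mpF2 (E0 E1 E2 : ℝ) : ℝ :=
  (E2 - E0 * mpMoment (E1 / E0) 2) /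
    (mpMoment (E1 / E0) 4 - (mpMoment (E1 / E0) 2) ^ 2 -
      mpBeta (E1 / E0) * (mpMoment (E1 / E0) 3 - mpMoment (E1 / E0) 1 * mpMoment (E1 / E0) 2))

/-- The MP₂ closure moment `E₃(E₀,E₁,E₂)`. -/
noncomputable def mpE3 (E0 E1 E2 : ℝ) : ℝ :=
  E0 * mpMoment (E1 / E0) 3 +
    mpF2 E0 E1 E2 *
      (mpMoment (E1 / E0) 5 - mpMoment (E1 / E0) 2 * mpMoment (E1 / E0) 3 -
        mpBeta (E1 / E0) * (mpMoment (E1 / E0) 4 - mpMoment (E1 / E0) 1 * mpMoment (E1 / E0) 3))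

section Cubic

variable {a b c : ℝ}

lemma cubic_pos_of_le {x : ℝ} (hx : 1 + |a| + |b| + |c| ≤ x) :
    0 < x ^ 3 - a * x ^ 2 - b * x - c := by
  have hx1 : 1 ≤ x := by linarith [abs_nonneg a, abs_nonneg b, abs_nonneg c]
  nlinarith [le_abs_self a, le_abs_self b, le_abs_self c, abs_nonneg a, abs_nonneg b,
    abs_nonneg c, mul_le_mul_of_nonneg_left hx (sq_nonneg x)]

lemma cubic_neg_of_le {x : ℝ} (hx : 1 + |a| + |b| + |c| ≤ -x) :
    x ^ 3 - a * x ^ 2 - b * x - c < 0 := by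
  have h := cubic_pos_of_le (a := -a) (b := b) (c := -c) (by simpa only [abs_neg] using hx)
  linear_combination h

lemma cubic_eq_prod_of_roots {l₁ l₂ l₃ : ℝ} (h₁₂ : l₁ ≠ l₂) (h₁₃ : l₁ ≠ l₃) (h₂₃ : l₂ ≠ l₃)
    (hl₁ : l₁ ^ 3 - a * l₁ ^ 2 - b * l₁ - c = 0) (hl₂ : l₂ ^ 3 - a * l₂ ^ 2 - b * l₂ - c = 0)
    (hl₃ : l₃ ^ 3 - a * l₃ ^ 2 - b * l₃ - c = 0) (x : ℝ) :
    x ^ 3 - a * x ^ 2 - b * x - c = (x - l₁) * (x - l₂) * (x - l₃) := by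
  have hsum : a = l₁ + l₂ + l₃ := by
    refine mul_left_cancel₀ (mul_ne_zero (mul_ne_zero (sub_ne_zero.2 h₁₂) (sub_ne_zero.2 h₁₃))
      (sub_ne_zero.2 h₂₃)) ?_
    linear_combination (l₃ - l₂) * hl₁ + (l₁ - l₃) * hl₂ + (l₂ - l₁) * hl₃
  have hpair : b = -(l₁ * l₂ + l₁ * l₃ + l₂ * l₃) := by
    refine mul_left_cancel₀ (sub_ne_zero.2 h₁₂) ?_
    linear_combination -(hl₁ - hl₂) - (l₁ - l₂) * (l₁ + l₂) * hsum
  have hprod : c = l₁ * l₂ * l₃ := by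
    linear_combination -hl₁ - l₁ ^ 2 * hsum - l₁ * hpair
  linear_combination -x ^ 2 * hsum - x * hpair - hprod

theorem cubic_three_roots_of_pos_of_neg {s t : ℝ} (hst : s < t)
    (hs : 0 < s ^ 3 - a * s ^ 2 - b * s - c) (ht : t ^ 3 - a * t ^ 2 - b * t - c < 0) :
    ∃ l₁ l₂ l₃ : ℝ, l₁ < l₂ ∧ l₂ < l₃ ∧
      ∀ x : ℝ, x ^ 3 - a * x ^ 2 - b * x - c = (x - l₁) * (x - l₂) * (x - l₃) := by
  have hcont : Continuous fun x : ℝ => x ^ 3 - a * x ^ 2 - b * x - c := by fun_prop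
  set M := 1 + |a| + |b| + |c| + |s| + |t|
  have hMs : -M ≤ s := by
    linarith [neg_abs_le s, abs_nonneg a, abs_nonneg b, abs_nonneg c, abs_nonneg t]
  have hMt : t ≤ M := by
    linarith [le_abs_self t, abs_nonneg a, abs_nonneg b, abs_nonneg c, abs_nonneg s]
  have hM : 1 + |a| + |b| + |c| ≤ M := by linarith [abs_nonneg s, abs_nonneg t]
  obtain ⟨l₁, ⟨-, hl₁s⟩, hl₁⟩ := intermediate_value_Ioo hMs hcont.continuousOn
    ⟨cubic_neg_of_le (by rwa [neg_neg]), hs⟩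
  obtain ⟨l₂, ⟨hsl₂, hl₂t⟩, hl₂⟩ := intermediate_value_Ioo' hst.le hcont.continuousOn ⟨ht, hs⟩
  obtain ⟨l₃, ⟨htl₃, -⟩, hl₃⟩ := intermediate_value_Ioo hMt hcont.continuousOn
    ⟨ht, cubic_pos_of_le hM⟩
  have h₁₂ : l₁ < l₂ := hl₁s.trans hsl₂
  have h₂₃ : l₂ < l₃ := hl₂t.trans htl₃
  exact ⟨l₁, l₂, l₃, h₁₂, h₂₃,
    cubic_eq_prod_of_roots h₁₂.ne (h₁₂.trans h₂₃).ne h₂₃.ne hl₁ hl₂ hl₃⟩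

end Cubic

lemma Real.pos_of_sign_eq_one {r : ℝ} (h : Real.sign r = 1) : 0 < r := by
  rcases lt_trichotomy r 0 with hr | rfl | hr
  · norm_num [Real.sign_of_neg hr] at h
  · norm_num [Real.sign_zero] at h
  · exact hr

lemma Real.neg_of_sign_eq_neg_one {r : ℝ} (h : Real.sign r = -1) : r < 0 := by
  rcases lt_trichotomy r 0 with hr | rfl | hr
  · exact hr
  · norm_num [Real.sign_zero] at h
  · norm_num [Real.sign_of_pos hr] at h

noncomputable def homogeneousAffine (g h : ℝ → ℝ) (x y z : ℝ) : ℝ := x * g (y / x) + z * h (y / x)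

section HomogeneousAffine

variable {g h : ℝ → ℝ} {x y : ℝ}

lemma deriv_homogeneousAffine_right (g h : ℝ → ℝ) (x y z : ℝ) :
    deriv (fun z => homogeneousAffine g h x y z) z = h (y / x) := by
  simp [homogeneousAffine]

lemma differentiableAt_of_differentiableAt_comp_div {f : ℝ → ℝ} (hx : x ≠ 0) (hy : y ≠ 0)
    (hf : DifferentiableAt ℝ (fun x' => f (y / x')) x) : DifferentiableAt ℝ f (y / x) := by
  have hinv : DifferentiableAt ℝ (fun v => y / v) (y / x) :=
    (differentiableAt_const y).div differentiableAt_id (div_ne_zero hy hx)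
  rw [← div_div_cancel₀ hy (b := x)] at hf
  simpa only [Function.comp_def, div_div_cancel₀ hy] using hf.comp (y / x) hinv

lemma differentiableAt_of_differentiableAt_homogeneousAffine {z₁ z₂ : ℝ} (hx : x ≠ 0)
    (hy : y ≠ 0) (hz : z₁ ≠ z₂)
    (h₁ : DifferentiableAt ℝ (fun x' => homogeneousAffine g h x' y z₁) x)
    (h₂ : DifferentiableAt ℝ (fun x' => homogeneousAffine g h x' y z₂) x) :
    DifferentiableAt ℝ g (y / x) ∧ DifferentiableAt ℝ h (y / x) := by
  have hh : DifferentiableAt ℝ (fun x' => h (y / x')) x := by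
    refine ((h₁.sub h₂).const_mul (z₁ - z₂)⁻¹).congr_of_eventuallyEq (.of_forall fun x' => ?_)
    simp only [homogeneousAffine, Pi.sub_apply]
    field_simp [sub_ne_zero.2 hz]
    ring
  have hg : DifferentiableAt ℝ (fun x' => g (y / x')) x := by
    refine ((differentiableAt_inv hx).mul (h₁.sub (hh.const_mul z₁))).congr_of_eventuallyEq ?_
    filter_upwards [eventually_ne_nhds hx] with x' hx'
    simp only [homogeneousAffine, Pi.mul_apply, Pi.sub_apply]
    field_simp
    ring
  exact ⟨differentiableAt_of_differentiableAt_comp_div hx hy hg,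
    differentiableAt_of_differentiableAt_comp_div hx hy hh⟩

lemma homogeneousAffine_euler (hx : x ≠ 0) (hg : DifferentiableAt ℝ g (y / x))
    (hh : DifferentiableAt ℝ h (y / x)) (z : ℝ) :
    x * deriv (fun x' => homogeneousAffine g h x' y z) x +
      y * deriv (fun y' => homogeneousAffine g h x y' z) y = x * g (y / x) := by
  have hdx : HasDerivAt (fun x' => y / x') (-(y / x ^ 2)) x := by
    simpa [div_eq_mul_inv] using (hasDerivAt_inv hx).const_mul y
  have hdy : HasDerivAt (fun y' => y' / x) (1 / x) y := by
    simpa using (hasDerivAt_id y).div_const x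
  have hΦx : HasDerivAt (fun x' => homogeneousAffine g h x' y z) _ x :=
    ((hasDerivAt_id x).mul (hg.hasDerivAt.comp x hdx)).add
      ((hh.hasDerivAt.comp x hdx).const_mul z)
  have hΦy : HasDerivAt (fun y' => homogeneousAffine g h x y' z) _ y :=
    ((hg.hasDerivAt.comp y hdy).const_mul x).add ((hh.hasDerivAt.comp y hdy).const_mul z)
  rw [hΦx.deriv, hΦy.deriv]
  simp only [id, Function.comp_apply]
  field_simp
  ring

end HomogeneousAffine

lemma integral_div_one_add_mul_pow_four {α : ℝ} (hα : α ^ 2 < 1) :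
    ∫ μ in (-1 : ℝ)..1, μ / (1 + α * μ) ^ 4 = -8 * α / (3 * (1 - α ^ 2) ^ 3) := by
  have hpos : ∀ μ ∈ Set.uIcc (-1 : ℝ) 1, 0 < 1 + α * μ := by
    intro μ hμ
    rw [Set.uIcc_of_le (by norm_num)] at hμ
    nlinarith [sq_nonneg (α * μ + 1), sq_nonneg (μ - α),
      mul_nonneg (sub_nonneg.2 hμ.2) (neg_le_iff_add_nonneg.1 hμ.1)]
  have hderiv : ∀ μ ∈ Set.uIcc (-1 : ℝ) 1,
      HasDerivAt (fun μ => μ ^ 2 * (3 + α * μ) / (6 * (1 + α * μ) ^ 3))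
        (μ / (1 + α * μ) ^ 4) μ := by
    intro μ hμ
    have hne := (hpos μ hμ).ne'
    have h := ((((hasDerivAt_id μ).pow 2).mul ((hasDerivAt_id μ).const_mul α |>.const_add 3)).div
      ((((hasDerivAt_id μ).const_mul α |>.const_add 1).pow 3).const_mul 6)
      (mul_ne_zero (by norm_num) (pow_ne_zero 3 hne)))
    refine h.congr_deriv ?_
    simp only [id, Pi.pow_apply, Pi.mul_apply]
    field_simp
    ring
  have hint : IntervalIntegrable (fun μ => μ / (1 + α * μ) ^ 4) volume (-1) 1 :=
    ContinuousOn.intervalIntegrable (continuousOn_id.div (by fun_prop)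
      fun μ hμ => pow_ne_zero 4 (hpos μ hμ).ne')
  rw [integral_eq_sub_of_hasDerivAt hderiv hint]
  have hplus : 1 + α ≠ 0 := by nlinarith
  have hminus : 1 - α ≠ 0 := by nlinarith
  have hsq : 1 - α ^ 2 ≠ 0 := by nlinarith
  norm_num [← sub_eq_add_neg]
  field_simp
  ring

lemma mpAlpha_sq_lt_one {u : ℝ} (hu : u ^ 2 < 1) : mpAlpha u ^ 2 < 1 := by
  have hs : √(4 - 3 * u ^ 2) ^ 2 = 4 - 3 * u ^ 2 := Real.sq_sqrt (by nlinarith)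
  have hs1 : 1 < √(4 - 3 * u ^ 2) := by nlinarith [Real.sqrt_nonneg (4 - 3 * u ^ 2)]
  rw [mpAlpha, div_pow, div_lt_one (by positivity)]
  nlinarith

lemma neg_four_mul_mpAlpha_div {u : ℝ} (hu : 3 * u ^ 2 ≤ 4) :
    -4 * mpAlpha u / (3 + mpAlpha u ^ 2) = u := by
  have hs : √(4 - 3 * u ^ 2) ^ 2 = 4 - 3 * u ^ 2 := Real.sq_sqrt (by linarith)
  have h2s : 0 < 2 + √(4 - 3 * u ^ 2) := by positivity
  rw [mpAlpha]
  field_simp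
  linear_combination -u * hs

lemma mpMoment_one {u : ℝ} (hu : u ^ 2 < 1) : mpMoment u 1 = u := by
  have hα := mpAlpha_sq_lt_one hu
  have h1 : 1 - mpAlpha u ^ 2 ≠ 0 := by linarith
  calc mpMoment u 1 = mpEps (mpAlpha u) * ∫ μ in (-1 : ℝ)..1, μ / (1 + mpAlpha u * μ) ^ 4 := by
        rw [mpMoment, ← intervalIntegral.integral_const_mul]
        congr 1 with μ
        rw [mpWeight]
        ring
    _ = -4 * mpAlpha u / (3 + mpAlpha u ^ 2) := by
        rw [integral_div_one_add_mul_pow_four hα, mpEps]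
        field_simp
        ring
    _ = u := neg_four_mul_mpAlpha_div (by linarith)

lemma mpMoment_zero_of_odd {k : ℕ} (hk : Odd k) : mpMoment 0 k = 0 := by
  have hw (μ : ℝ) : mpWeight 0 μ = 1 / 2 := by norm_num [mpWeight, mpAlpha, mpEps]
  simp only [mpMoment, hw]
  rw [intervalIntegral.integral_mul_const, integral_pow, hk.add_one.neg_one_pow]
  ring

noncomputable def mpSlope (u : ℝ) : ℝ :=
  (mpMoment u 5 - mpMoment u 2 * mpMoment u 3 -
      mpBeta u * (mpMoment u 4 - mpMoment u 1 * mpMoment u 3)) /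
    (mpMoment u 4 - mpMoment u 2 ^ 2 - mpBeta u * (mpMoment u 3 - mpMoment u 1 * mpMoment u 2))

noncomputable def mpIntercept (u : ℝ) : ℝ := mpMoment u 3 - mpMoment u 2 * mpSlope u

lemma mpE3_eq_homogeneousAffine : mpE3 = homogeneousAffine mpIntercept mpSlope := by
  ext E0 E1 E2
  simp only [mpE3, mpF2, homogeneousAffine, mpIntercept, mpSlope, div_mul_eq_mul_div,
    mul_div_assoc]
  ring

lemma mpE3_flux_zero (E0 E2 : ℝ) : mpE3 E0 0 E2 = 0 := by
  simp [mpE3_eq_homogeneousAffine, homogeneousAffine, mpIntercept, mpSlope, mpBeta,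
    mpMoment_zero_of_odd (show Odd 1 by decide), mpMoment_zero_of_odd (show Odd 3 by decide),
    mpMoment_zero_of_odd (show Odd 5 by decide)]

lemma mpE3_charPoly_eval_ratio {E0 E1 E2 z : ℝ} (hE0 : E0 ≠ 0) (hE1 : E1 ≠ 0) (hz : z ≠ E2)
    (hE2 : DifferentiableAt ℝ (fun x => mpE3 x E1 E2) E0)
    (hz' : DifferentiableAt ℝ (fun x => mpE3 x E1 z) E0) (hu : (E1 / E0) ^ 2 < 1) :
    (E1 / E0) ^ 3 - deriv (fun z => mpE3 E0 E1 z) E2 * (E1 / E0) ^ 2 -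
        deriv (fun y => mpE3 E0 y E2) E1 * (E1 / E0) - deriv (fun x => mpE3 x E1 E2) E0 =
      -(mpMoment (E1 / E0) 3 - mpMoment (E1 / E0) 1 ^ 3 -
        (mpMoment (E1 / E0) 2 - mpMoment (E1 / E0) 1 ^ 2) * deriv (fun z => mpE3 E0 E1 z) E2) := by
  rw [mpE3_eq_homogeneousAffine] at hE2 hz' ⊢
  obtain ⟨hg, hh⟩ := differentiableAt_of_differentiableAt_homogeneousAffine hE0 hE1 hz.symm hE2 hz'
  have heuler : deriv (fun y => homogeneousAffine mpIntercept mpSlope E0 y E2) E1 * (E1 / E0) +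
      deriv (fun x => homogeneousAffine mpIntercept mpSlope x E1 E2) E0 =
        mpIntercept (E1 / E0) := by
    have := homogeneousAffine_euler hE0 hg hh E2
    field_simp
    linear_combination this
  rw [deriv_homogeneousAffine_right, mpMoment_one hu]
  rw [mpIntercept] at heuler
  linear_combination -heuler

theorem MP2_hyperbolic_general
    (ha : ∀ E0 E1 E2 : ℝ, 0 < E0 → E2 < E0 → E1 ^ 2 < E0 * E2 →
      Real.sign (deriv (fun x => mpE3 x E1 E2) E0) = -Real.sign E1)
    (hb : ∀ E0 E2 : ℝ, 0 < E0 → E2 < E0 → 0 < E2 →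
      0 < deriv (fun y => mpE3 E0 y E2) 0)
    (hd : ∀ E0 E1 E2 : ℝ, 0 < E0 → E2 < E0 → E1 ^ 2 < E0 * E2 →
      Real.sign (mpMoment (E1 / E0) 3 - (mpMoment (E1 / E0) 1) ^ 3 -
          (mpMoment (E1 / E0) 2 - (mpMoment (E1 / E0) 1) ^ 2) *
            deriv (fun z => mpE3 E0 E1 z) E2)
        = Real.sign E1) :
    ∀ E0 E1 E2 : ℝ, 0 < E0 → E2 < E0 → E1 ^ 2 < E0 * E2 →
      ∃ l1 l2 l3 : ℝ, l1 < l2 ∧ l2 < l3 ∧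
        ∀ x : ℝ,
          x ^ 3 - (deriv (fun z => mpE3 E0 E1 z) E2) * x ^ 2 -
              (deriv (fun y => mpE3 E0 y E2) E1) * x -
              (deriv (fun x' => mpE3 x' E1 E2) E0)
            = (x - l1) * (x - l2) * (x - l3) := by
  intro E0 E1 E2 hE0 hE2 hreal
  obtain rfl | hE1 := eq_or_ne E1 0
  · have hB := hb E0 E2 hE0 hE2 (by nlinarith)
    simp only [mpE3_flux_zero, deriv_const']
    refine ⟨-√_, 0, √_, by simpa using hB, Real.sqrt_pos.2 hB, fun x => ?_⟩
    linear_combination x * Real.sq_sqrt hB.le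
  have hdiff {z : ℝ} (hz : z < E0) (hz' : E1 ^ 2 < E0 * z) :
      DifferentiableAt ℝ (fun x => mpE3 x E1 z) E0 := by
    refine differentiableAt_of_deriv_ne_zero fun h0 => hE1 ?_
    simpa [h0, eq_comm (a := (0 : ℝ))] using ha E0 E1 z hE0 hz hz'
  have hu : (E1 / E0) ^ 2 < 1 := by
    rw [div_pow, div_lt_one (by positivity)]
    nlinarith
  have hp := mpE3_charPoly_eval_ratio hE0.ne' hE1 (by linarith : (E2 + E0) / 2 ≠ E2)
    (hdiff hE2 hreal) (hdiff (by linarith) (by nlinarith)) hu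
  have hX := hd E0 E1 E2 hE0 hE2 hreal
  have hC := ha E0 E1 E2 hE0 hE2 hreal
  rcases hE1.lt_or_gt with hneg | hpos
  · rw [Real.sign_of_neg hneg, neg_neg] at hC
    rw [Real.sign_of_neg hneg] at hX
    exact cubic_three_roots_of_pos_of_neg (div_neg_of_neg_of_pos hneg hE0)
      (by rw [hp]; linarith [Real.neg_of_sign_eq_neg_one hX])
      (by linarith [Real.pos_of_sign_eq_one hC])
  · rw [Real.sign_of_pos hpos] at hC hX
    exact cubic_three_roots_of_pos_of_neg (div_pos hpos hE0)
      (by linarith [Real.neg_of_sign_eq_neg_one hC])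
      (by rw [hp]; linarith [Real.pos_of_sign_eq_one hX])

/-- Hyperbolicity of the MP₂ system: assuming the closure satisfies
(a) `sgn(∂E₃/∂E₀) = -sgn(E₁)`, (b) `∂E₃/∂E₁ > 0` at `E₁ = 0`,
(c) `∂²E₃/∂E₂² = 0`, and (d) `sgn(𝓔₃ - 𝓔₁³ - (𝓔₂ - 𝓔₁²)∂E₃/∂E₂) = sgn(E₁)`
on the realizable domain, the characteristic polynomial
`p(λ) = λ³ - (∂E₃/∂E₂)λ² - (∂E₃/∂E₁)λ - ∂E₃/∂E₀` has three distinct real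
roots at every realizable state. -/
theorem MP2_hyperbolic
    (ha : ∀ E0 E1 E2 : ℝ, 0 < E0 → E2 < E0 → E1 ^ 2 < E0 * E2 →
      Real.sign (deriv (fun x => mpE3 x E1 E2) E0) = -Real.sign E1)
    (hb : ∀ E0 E2 : ℝ, 0 < E0 → E2 < E0 → 0 < E2 →
      0 < deriv (fun y => mpE3 E0 y E2) 0)
    (hc : ∀ E0 E1 E2 : ℝ, 0 < E0 → E2 < E0 → E1 ^ 2 < E0 * E2 →
      deriv (deriv (fun z => mpE3 E0 E1 z)) E2 = 0)
    (hd : ∀ E0 E1 E2 : ℝ, 0 < E0 → E2 < E0 → E1 ^ 2 < E0 * E2 →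
      Real.sign (mpMoment (E1 / E0) 3 - (mpMoment (E1 / E0) 1) ^ 3 -
          (mpMoment (E1 / E0) 2 - (mpMoment (E1 / E0) 1) ^ 2) *
            deriv (fun z => mpE3 E0 E1 z) E2)
        = Real.sign E1) :
    ∀ E0 E1 E2 : ℝ, 0 < E0 → E2 < E0 → E1 ^ 2 < E0 * E2 →
      ∃ l1 l2 l3 : ℝ, l1 < l2 ∧ l2 < l3 ∧
        ∀ x : ℝ,
          x ^ 3 - (deriv (fun z => mpE3 E0 E1 z) E2) * x ^ 2 -
              (deriv (fun y => mpE3 E0 y E2) E1) * x -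
              (deriv (fun x' => mpE3 x' E1 E2) E0)
            = (x - l1) * (x - l2) * (x - l3) :=
  MP2_hyperbolic_general ha hb hd
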